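/- Let L > 0 and let f : E → ℝ be convex with nonempty minimizer set X* and minimum value f*, and suppose f is L-QG+. Let x_0 ∈ E and define iterates of the heavy-ball method: for k ≥ 1, pick g_{k−1} ∈ ∂f(x_{k−1}) and set x_k = (k/(k+1))·x_{k−1} + (1/(k+1))·x_0 − (1/(k+1))·∑_{i=0}^{k−1} (1/L)·g_i, where additionally g_k ∈ ∂f(x_k) for every k. Then for every n ∈ ℕ, f(x_n) − f* ≤ (L/(2(n+1)))·d(x_0, X*)². -/

import Mathlib

/-!
With `y_k := x_0 - (1/L) ∑_{i<k} g_i`, the update says `(k+1) x_k = k x_{k-1} + y_k`, and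
`y_{k+1} = y_k - g_k / L` is a gradient step. For a minimizer `z`, the potential
`k (f x_{k-1} - f*) + (L/2) ‖y_k - z‖²` does not increase: the subgradient inequality between
consecutive iterates turns the `x`-recursion into an inner product, and evaluating QG+ at
`z + g_k / L` gives `f x_k - f* + ‖g_k‖² / (2L) ≤ ⟪g_k, x_k - z⟫`, which absorbs the rest.
-/

open scoped RealInnerProductSpace

lemma Metric.le_mul_infDist_sq {α : Type*} [PseudoMetricSpace α] {s : Set α} (hs : s.Nonempty)
    {x : α} {a c : ℝ} (hc : 0 ≤ c) (h : ∀ y ∈ s, a ≤ c * dist x y ^ 2) :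
    a ≤ c * Metric.infDist x s ^ 2 := by
  rcases le_or_gt a 0 with ha | ha
  · exact ha.trans (by positivity)
  obtain ⟨y, hy⟩ := hs
  have hc : 0 < c := pos_of_mul_pos_left (ha.trans_le (h y hy)) (sq_nonneg _)
  have hsqrt : √(a / c) ≤ Metric.infDist x s :=
    (Metric.le_infDist ⟨y, hy⟩).2 fun y hy =>
      (Real.sqrt_le_left dist_nonneg).2 ((div_le_iff₀' hc).2 (h y hy))
  calc a = c * √(a / c) ^ 2 := by rw [Real.sq_sqrt (by positivity)]; field_simp
    _ ≤ c * Metric.infDist x s ^ 2 := by gcongr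

section QuadraticUpperBound

variable {E : Type*} [NormedAddCommGroup E] [InnerProductSpace ℝ E]

lemma half_mul_norm_sub_inv_smul_sq {L : ℝ} (hL : L ≠ 0) (v w : E) :
    L / 2 * ‖v - (1 / L) • w‖ ^ 2 = L / 2 * ‖v‖ ^ 2 - ⟪w, v⟫ + ‖w‖ ^ 2 / (2 * L) := by
  rw [norm_sub_sq_real, real_inner_smul_right, norm_smul, real_inner_comm v w, Real.norm_eq_abs,
    mul_pow, sq_abs]
  field_simp

lemma sub_add_norm_sq_div_le_inner_of_quadUpperBound {f : E → ℝ} {s : Set E} {L fstar : ℝ}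
    (hL : 0 < L) (hQG : ∀ z, f z - fstar ≤ L / 2 * Metric.infDist z s ^ 2)
    {x g z : E} (hsub : ∀ y, f y ≥ f x + ⟪g, y - x⟫) (hz : z ∈ s) :
    f x - fstar + ‖g‖ ^ 2 / (2 * L) ≤ ⟪g, x - z⟫ := by
  set z' := z + (1 / L) • g
  have hdist : Metric.infDist z' s ≤ ‖g‖ / L := by
    refine (Metric.infDist_le_dist_of_mem hz).trans_eq ?_
    rw [dist_eq_norm, add_sub_cancel_left, norm_smul, Real.norm_of_nonneg (by positivity)]
    ring
  have hfz' : f z' - fstar ≤ ‖g‖ ^ 2 / (2 * L) :=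
    calc f z' - fstar ≤ L / 2 * Metric.infDist z' s ^ 2 := hQG z'
      _ ≤ L / 2 * (‖g‖ / L) ^ 2 := by gcongr; exact Metric.infDist_nonneg
      _ = ‖g‖ ^ 2 / (2 * L) := by field_simp
  have hinner : ⟪g, z' - x⟫ = ‖g‖ ^ 2 / L - ⟪g, x - z⟫ := by
    rw [show z' - x = (1 / L) • g - (x - z) by simp only [z']; abel, inner_sub_right,
      real_inner_smul_right, real_inner_self_eq_norm_sq]
    ring
  have hsub' := hsub z'
  rw [hinner] at hsub'
  linarith [show ‖g‖ ^ 2 / L = 2 * (‖g‖ ^ 2 / (2 * L)) by field_simp]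

end QuadraticUpperBound

namespace HeavyBall

variable {E : Type*} [NormedAddCommGroup E] [InnerProductSpace ℝ E]

/-- `t` is the weight of the previous iterate `x`, `x'` the new iterate with subgradient `g'`,
and `y` the current gradient-step point. -/
lemma potential_step {f : E → ℝ} {L fstar t : ℝ} (hL : L ≠ 0) (ht : 0 ≤ t) {x x' g' y z : E}
    (hstrong : f x' - fstar + ‖g'‖ ^ 2 / (2 * L) ≤ ⟪g', x' - z⟫)
    (hsub : f x ≥ f x' + ⟪g', x - x'⟫) (hxy : t • (x - x') = x' - y) :
    (t + 1) * (f x' - fstar) + L / 2 * ‖y - (1 / L) • g' - z‖ ^ 2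
      ≤ t * (f x - fstar) + L / 2 * ‖y - z‖ ^ 2 := by
  have hexpand := half_mul_norm_sub_inv_smul_sq hL (y - z) g'
  rw [sub_right_comm] at hexpand
  have hinner : t * ⟪g', x - x'⟫ = ⟪g', x' - z⟫ - ⟪g', y - z⟫ := by
    rw [← real_inner_smul_right, hxy, ← inner_sub_right, sub_sub_sub_cancel_right]
  nlinarith

/-- The heavy-ball iterate `x k` is the average of `anchor (x 0) g L j` over `j ≤ k`. -/
noncomputable def anchor (x₀ : E) (g : ℕ → E) (L : ℝ) (k : ℕ) : E :=
  x₀ - ∑ i ∈ Finset.range k, (1 / L) • g i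

lemma anchor_zero (x₀ : E) (g : ℕ → E) (L : ℝ) : anchor x₀ g L 0 = x₀ := by
  simp [anchor]

lemma anchor_succ (x₀ : E) (g : ℕ → E) (L : ℝ) (k : ℕ) :
    anchor x₀ g L (k + 1) = anchor x₀ g L k - (1 / L) • g k := by
  simp only [anchor, Finset.sum_range_succ]
  abel

lemma natCast_smul_sub_eq_sub_anchor {L : ℝ} {x g : ℕ → E}
    (hupd : ∀ k, 1 ≤ k →
      x k = ((k : ℝ) / ((k : ℝ) + 1)) • x (k - 1) + ((1 : ℝ) / ((k : ℝ) + 1)) • x 0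
        - ((1 : ℝ) / ((k : ℝ) + 1)) • ∑ i ∈ Finset.range k, (1 / L) • g i) (k : ℕ) :
    (k : ℝ) • (x (k - 1) - x k) = x k - anchor (x 0) g L k := by
  rcases Nat.eq_zero_or_pos k with rfl | hk
  · simp [anchor_zero]
  have hk1 : (k : ℝ) + 1 ≠ 0 := by positivity
  rw [hupd k hk, anchor]
  match_scalars <;> field_simp <;> ring

/-- At `m = 0` the junk value `x (0 - 1)` is multiplied by `0`. -/
lemma potential_le {f : E → ℝ} {s : Set E} {L fstar : ℝ} (hL : 0 < L)
    (hQG : ∀ z, f z - fstar ≤ L / 2 * Metric.infDist z s ^ 2) {x g : ℕ → E}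
    (hsub : ∀ k, ∀ y, f y ≥ f (x k) + ⟪g k, y - x k⟫)
    (hupd : ∀ k, 1 ≤ k →
      x k = ((k : ℝ) / ((k : ℝ) + 1)) • x (k - 1) + ((1 : ℝ) / ((k : ℝ) + 1)) • x 0
        - ((1 : ℝ) / ((k : ℝ) + 1)) • ∑ i ∈ Finset.range k, (1 / L) • g i)
    {z : E} (hz : z ∈ s) (m : ℕ) :
    (m : ℝ) * (f (x (m - 1)) - fstar) + L / 2 * ‖anchor (x 0) g L m - z‖ ^ 2
      ≤ L / 2 * ‖x 0 - z‖ ^ 2 := by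
  induction m with
  | zero => simp [anchor_zero]
  | succ m ih =>
    refine le_trans ?_ ih
    rw [anchor_succ, Nat.add_sub_cancel, Nat.cast_succ]
    exact potential_step hL.ne' m.cast_nonneg
      (sub_add_norm_sq_div_le_inner_of_quadUpperBound hL hQG (hsub m) hz) (hsub m _)
      (natCast_smul_sub_eq_sub_anchor hupd m)

end HeavyBall

theorem heavy_ball_worst_case_guarantee_general
    {E : Type*} [NormedAddCommGroup E] [InnerProductSpace ℝ E]
    (L : ℝ) (hL : 0 < L) (f : E → ℝ)
    (Xstar : Set E) (hne : Xstar.Nonempty)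
    (fstar : ℝ)
    (hQG : ∀ z, f z - fstar ≤ L / 2 * Metric.infDist z Xstar ^ 2)
    (x g : ℕ → E)
    (hsub : ∀ k, ∀ y, f y ≥ f (x k) + ⟪g k, y - x k⟫)
    (hupd : ∀ k, 1 ≤ k →
      x k = ((k : ℝ) / ((k : ℝ) + 1)) • x (k - 1) + ((1 : ℝ) / ((k : ℝ) + 1)) • x 0
        - ((1 : ℝ) / ((k : ℝ) + 1)) • ∑ i ∈ Finset.range k, (1 / L) • g i) :
    ∀ n : ℕ, f (x n) - fstar ≤ L / (2 * ((n : ℝ) + 1)) * Metric.infDist (x 0) Xstar ^ 2 := by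
  intro n
  refine Metric.le_mul_infDist_sq hne (by positivity) fun z hz => ?_
  have hpot := HeavyBall.potential_le hL hQG hsub hupd hz (n + 1)
  rw [Nat.add_sub_cancel, Nat.cast_succ] at hpot
  rw [dist_eq_norm, div_mul_eq_mul_div, le_div_iff₀ (by positivity)]
  nlinarith [norm_nonneg (HeavyBall.anchor (x 0) g L (n + 1) - z)]

theorem heavy_ball_worst_case_guarantee
    {E : Type*} [NormedAddCommGroup E] [InnerProductSpace ℝ E] [FiniteDimensional ℝ E]
    (L : ℝ) (hL : 0 < L) (f : E → ℝ) (hconv : ConvexOn ℝ Set.univ f)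
    (Xstar : Set E) (hXstar : Xstar = {z | ∀ y, f z ≤ f y}) (hne : Xstar.Nonempty)
    (fstar : ℝ) (hfstar : ∀ z ∈ Xstar, f z = fstar)
    (hQG : ∀ z, f z - fstar ≤ L / 2 * Metric.infDist z Xstar ^ 2)
    (x g : ℕ → E)
    (hsub : ∀ k, ∀ y, f y ≥ f (x k) + ⟪g k, y - x k⟫)
    (hupd : ∀ k, 1 ≤ k →
      x k = ((k : ℝ) / ((k : ℝ) + 1)) • x (k - 1) + ((1 : ℝ) / ((k : ℝ) + 1)) • x 0
        - ((1 : ℝ) / ((k : ℝ) + 1)) • ∑ i ∈ Finset.range k, (1 / L) • g i) :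
    ∀ n : ℕ, f (x n) - fstar ≤ L / (2 * ((n : ℝ) + 1)) * Metric.infDist (x 0) Xstar ^ 2 :=
  heavy_ball_worst_case_guarantee_general L hL f Xstar hne fstar hQG x g hsub hupd
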